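/- Under the one-step MCMC approximation guarantee—for every S ⊇ S̃, either err_p(X,S) ≤ ε₁·err_p(X,S̃) or ‖P⁽¹⁾(·|S) − P̃⁽¹⁾_m(·|S)‖_TV ≤ ε₂t—the l-iteration expected errors satisfy, for every S₀ ⊇ S̃: Ẽ[err_p(X, S₀ ∪ T_{1:l})] ≤ E[err_p(X, S₀ ∪ T_{1:l})] + (ε₁·Ẽ[ind_p(X, S₀∪T_{1:l})] + ε₂·t·l)·err_p(X, S̃), where the expectations E and Ẽ are over l rounds of exact adaptive sampling and MCMC sampling respectively, and ind_p(X,S) = 1 if err_p(X,S) ≤ ε₁·err_p(X,S̃). -/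
import Mathlib


open Finset
open scoped Classical

/-- Euclidean distance from `x` to the linear span of the finite set `S`. -/
noncomputable def sdist {d : ℕ} (S : Finset (EuclideanSpace ℝ (Fin d)))
    (x : EuclideanSpace ℝ (Fin d)) : ℝ :=
  Metric.infDist x
    (Submodule.span ℝ (S : Set (EuclideanSpace ℝ (Fin d))) : Set (EuclideanSpace ℝ (Fin d)))

/-- `ℓ_p` subspace-approximation error of the span of `S` on the point set `X`. -/
noncomputable def errp {d : ℕ} (p : ℝ) (X S : Finset (EuclideanSpace ℝ (Fin d))) : ℝ :=
  ∑ x ∈ X, sdist S x ^ p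

/-- The finset of points appearing in a `t`-tuple of points of `X`. -/
noncomputable def tupleSet {d t : ℕ} (X : Finset (EuclideanSpace ℝ (Fin d)))
    (T : Fin t → {x // x ∈ X}) : Finset (EuclideanSpace ℝ (Fin d)) :=
  Finset.image (fun i => (T i : EuclideanSpace ℝ (Fin d))) Finset.univ

/-- Adaptive sampling distribution: `t` i.i.d. points, each picked with
probability proportional to `d(x, span S)^p`. -/
noncomputable def adaptP {d t : ℕ} (p : ℝ) (X : Finset (EuclideanSpace ℝ (Fin d)))
    (S : Finset (EuclideanSpace ℝ (Fin d))) (T : Fin t → {x // x ∈ X}) : ℝ :=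
  ∏ i, sdist S (T i : EuclideanSpace ℝ (Fin d)) ^ p / errp p X S

/-- Expected value of `g` on the set obtained after `l` rounds of sampling
`t`-tuples from the (round-dependent) distribution `P`, starting from `S`. -/
noncomputable def chainExp {d t : ℕ} (X : Finset (EuclideanSpace ℝ (Fin d)))
    (P : Finset (EuclideanSpace ℝ (Fin d)) → (Fin t → {x // x ∈ X}) → ℝ)
    (g : Finset (EuclideanSpace ℝ (Fin d)) → ℝ) :
    ℕ → Finset (EuclideanSpace ℝ (Fin d)) → ℝ
  | 0, S => g S
  | l+1, S => ∑ T : Fin t → {x // x ∈ X}, P S T * chainExp X P g l (S ∪ tupleSet X T)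

-- auxiliary lemmas

lemma sdist_nonneg' {d : ℕ} (S : Finset (EuclideanSpace ℝ (Fin d))) (x) :
    0 ≤ sdist S x := Metric.infDist_nonneg

lemma sdist_anti {d : ℕ} {S S' : Finset (EuclideanSpace ℝ (Fin d))} (h : S ⊆ S') (x) :
    sdist S' x ≤ sdist S x := by
  apply Metric.infDist_le_infDist_of_subset
  · exact SetLike.coe_subset_coe.mpr (Submodule.span_mono (by exact_mod_cast h))
  · exact ⟨0, Submodule.zero_mem _⟩

lemma errp_nonneg' {d : ℕ} (p : ℝ) (X S : Finset (EuclideanSpace ℝ (Fin d))) :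
    0 ≤ errp p X S :=
  Finset.sum_nonneg fun x _ => Real.rpow_nonneg (sdist_nonneg' S x) p

lemma errp_anti {d : ℕ} {p : ℝ} (hp : 0 ≤ p) (X : Finset (EuclideanSpace ℝ (Fin d)))
    {S S' : Finset (EuclideanSpace ℝ (Fin d))} (h : S ⊆ S') :
    errp p X S' ≤ errp p X S :=
  Finset.sum_le_sum fun x _ =>
    Real.rpow_le_rpow (sdist_nonneg' S' x) (sdist_anti h x) hp

lemma adaptP_nonneg {d t : ℕ} (p : ℝ) (X S : Finset (EuclideanSpace ℝ (Fin d)))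
    (T : Fin t → {x // x ∈ X}) : 0 ≤ adaptP p X S T :=
  Finset.prod_nonneg fun i _ =>
    div_nonneg (Real.rpow_nonneg (sdist_nonneg' S _) p) (errp_nonneg' p X S)

lemma adaptP_sum {d t : ℕ} (p : ℝ) (X S : Finset (EuclideanSpace ℝ (Fin d)))
    (h : errp p X S ≠ 0) :
    ∑ T : Fin t → {x // x ∈ X}, adaptP p X S T = 1 := by
  unfold adaptP
  rw [← Fintype.sum_pow
    (fun a : {x // x ∈ X} => sdist S (a : EuclideanSpace ℝ (Fin d)) ^ p / errp p X S) t,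
    ← Finset.sum_div, Finset.sum_coe_sort X (fun x => sdist S x ^ p)]
  rw [show (∑ x ∈ X, sdist S x ^ p) = errp p X S from rfl, div_self h, one_pow]

lemma adaptP_sum_le {d t : ℕ} (p : ℝ) (X S : Finset (EuclideanSpace ℝ (Fin d))) :
    ∑ T : Fin t → {x // x ∈ X}, adaptP p X S T ≤ 1 := by
  by_cases h : errp p X S = 0
  · rcases Nat.eq_zero_or_pos t with ht | ht
    · subst ht
      simp [adaptP]
    · have hz : ∀ T : Fin t → {x // x ∈ X}, adaptP p X S T = 0 := by
        intro T
        unfold adaptP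
        apply Finset.prod_eq_zero (Finset.mem_univ (⟨0, ht⟩ : Fin t))
        have hx : sdist S ((T ⟨0, ht⟩ : {x // x ∈ X}) : EuclideanSpace ℝ (Fin d)) ^ p = 0 :=
          (Finset.sum_eq_zero_iff_of_nonneg
            (fun x _ => Real.rpow_nonneg (sdist_nonneg' S x) p)).mp h _ (T ⟨0, ht⟩).2
        rw [hx, zero_div]
      simp [hz]
  · exact le_of_eq (adaptP_sum p X S h)

lemma chainExp_nonneg {d t : ℕ} (X : Finset (EuclideanSpace ℝ (Fin d)))
    (P : Finset (EuclideanSpace ℝ (Fin d)) → (Fin t → {x // x ∈ X}) → ℝ)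
    (g : Finset (EuclideanSpace ℝ (Fin d)) → ℝ)
    (hP : ∀ S T, 0 ≤ P S T) (hg : ∀ S, 0 ≤ g S) :
    ∀ l S, 0 ≤ chainExp X P g l S := by
  intro l
  induction l with
  | zero => intro S; exact hg S
  | succ l ih =>
    intro S
    simp only [chainExp]
    exact Finset.sum_nonneg fun T _ => mul_nonneg (hP S T) (ih _)

lemma chainExp_le_errp {d t : ℕ} {p : ℝ} (hp : 0 ≤ p)
    (X : Finset (EuclideanSpace ℝ (Fin d)))
    (P : Finset (EuclideanSpace ℝ (Fin d)) → (Fin t → {x // x ∈ X}) → ℝ)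
    (hP0 : ∀ S T, 0 ≤ P S T)
    (hP1 : ∀ S, ∑ T : Fin t → {x // x ∈ X}, P S T ≤ 1) :
    ∀ l S, chainExp X P (errp p X) l S ≤ errp p X S := by
  intro l
  induction l with
  | zero => intro S; exact le_rfl
  | succ l ih =>
    intro S
    simp only [chainExp]
    calc ∑ T : Fin t → {x // x ∈ X}, P S T * chainExp X P (errp p X) l (S ∪ tupleSet X T)
        ≤ ∑ T : Fin t → {x // x ∈ X}, P S T * errp p X S := by
          apply Finset.sum_le_sum
          intro T _
          exact mul_le_mul_of_nonneg_left
            ((ih _).trans (errp_anti hp X Finset.subset_union_left)) (hP0 S T)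
      _ = (∑ T : Fin t → {x // x ∈ X}, P S T) * errp p X S := by rw [Finset.sum_mul]
      _ ≤ 1 * errp p X S :=
          mul_le_mul_of_nonneg_right (hP1 S) (errp_nonneg' p X S)
      _ = errp p X S := one_mul _

lemma chainExp_ind_one {d t : ℕ} {p ε₁ : ℝ} (hp : 0 ≤ p)
    (X Stilde : Finset (EuclideanSpace ℝ (Fin d)))
    (P : Finset (EuclideanSpace ℝ (Fin d)) → (Fin t → {x // x ∈ X}) → ℝ)
    (hP1 : ∀ S, ∑ T : Fin t → {x // x ∈ X}, P S T = 1) :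
    ∀ l S, errp p X S ≤ ε₁ * errp p X Stilde →
      chainExp X P (fun S => if errp p X S ≤ ε₁ * errp p X Stilde then (1:ℝ) else 0) l S = 1 := by
  intro l
  induction l with
  | zero => intro S h; simp [chainExp, h]
  | succ l ih =>
    intro S h
    simp only [chainExp]
    have : ∀ T : Fin t → {x // x ∈ X},
        chainExp X P (fun S => if errp p X S ≤ ε₁ * errp p X Stilde then (1:ℝ) else 0) l
          (S ∪ tupleSet X T) = 1 :=
      fun T => ih _ ((errp_anti hp X Finset.subset_union_left).trans h)
    simp only [this, mul_one]
    exact hP1 S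

lemma tv_shift {ι : Type*} [Fintype ι] (P Q f : ι → ℝ) (M B : ℝ) (hM : 0 ≤ M)
    (hPQ : ∑ i, P i = ∑ i, Q i)
    (hf0 : ∀ i, 0 ≤ f i) (hfM : ∀ i, f i ≤ M)
    (hB : (1/2) * ∑ i, |Q i - P i| ≤ B) :
    ∑ i, P i * f i ≤ ∑ i, Q i * f i + B * M := by
  have key : ∀ i, P i * f i - Q i * f i ≤ |Q i - P i| * (M/2) + (P i - Q i) * (M/2) := by
    intro i
    have h2 : (P i - Q i) * (f i - M/2) ≤ |Q i - P i| * (M/2) := by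
      calc (P i - Q i) * (f i - M/2) ≤ |(P i - Q i) * (f i - M/2)| := le_abs_self _
        _ = |Q i - P i| * |f i - M/2| := by rw [abs_mul, abs_sub_comm]
        _ ≤ |Q i - P i| * (M/2) := by
            apply mul_le_mul_of_nonneg_left _ (abs_nonneg _)
            rw [abs_le]
            constructor
            · linarith [hf0 i]
            · linarith [hfM i]
    nlinarith [h2]
  have hsum := Finset.sum_le_sum (fun i (_ : i ∈ Finset.univ) => key i)
  rw [Finset.sum_sub_distrib, Finset.sum_add_distrib, ← Finset.sum_mul, ← Finset.sum_mul,
    Finset.sum_sub_distrib, hPQ, sub_self, zero_mul, add_zero] at hsum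
  nlinarith [mul_le_mul_of_nonneg_right (by linarith : (∑ i, |Q i - P i|) ≤ 2 * B)
    (by linarith : (0:ℝ) ≤ M / 2)]


/-- Induction over `l` rounds: if for every `S ⊇ S̃` either the error has
already dropped below `ε₁·err_p(X,S̃)` or one MCMC round is within total
variation `ε₂t` of one adaptive-sampling round, then the `l`-round MCMC
expected error exceeds the `l`-round adaptive-sampling expected error by at
most `(ε₁·Ẽ[ind] + ε₂tl)·err_p(X,S̃)`. -/
theorem mcmc_vs_adaptive {d t : ℕ} (p ε₁ ε₂ : ℝ) (hp : 1 ≤ p)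
    (hε₁ : ε₁ ∈ Set.Ioo (0:ℝ) 1) (hε₂ : ε₂ ∈ Set.Ioo (0:ℝ) 1)
    (X Stilde : Finset (EuclideanSpace ℝ (Fin d))) (hSt : Stilde ⊆ X)
    (Ptilde : Finset (EuclideanSpace ℝ (Fin d)) → (Fin t → {x // x ∈ X}) → ℝ)
    (hPt0 : ∀ S T, 0 ≤ Ptilde S T)
    (hPt1 : ∀ S, ∑ T : Fin t → {x // x ∈ X}, Ptilde S T = 1)
    (hdich : ∀ S : Finset (EuclideanSpace ℝ (Fin d)), Stilde ⊆ S →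
      errp p X S ≤ ε₁ * errp p X Stilde ∨
        (1/2) * ∑ T : Fin t → {x // x ∈ X}, |adaptP p X S T - Ptilde S T| ≤ ε₂ * t)
    (l : ℕ) :
    ∀ S₀ : Finset (EuclideanSpace ℝ (Fin d)), Stilde ⊆ S₀ →
      chainExp (t := t) X Ptilde (errp p X) l S₀ ≤
        chainExp (t := t) X (adaptP (t := t) p X) (errp p X) l S₀ +
          (ε₁ * chainExp (t := t) X Ptilde
              (fun S => if errp p X S ≤ ε₁ * errp p X Stilde then 1 else 0) l S₀
            + ε₂ * t * l) * errp p X Stilde := by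
  have hp0 : (0:ℝ) ≤ p := by linarith
  have hM : 0 ≤ errp p X Stilde := errp_nonneg' p X Stilde
  induction l with
  | zero =>
    intro S₀ _
    simp only [chainExp, Nat.cast_zero, mul_zero, add_zero]
    have h1 : (0:ℝ) ≤ (if errp p X S₀ ≤ ε₁ * errp p X Stilde then (1:ℝ) else 0) := by
      split <;> norm_num
    nlinarith [hε₁.1, mul_nonneg (mul_nonneg hε₁.1.le h1) hM]
  | succ l ih =>
    intro S₀ hS₀
    have hsub : ∀ T : Fin t → {x // x ∈ X}, Stilde ⊆ S₀ ∪ tupleSet X T :=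
      fun T => hS₀.trans Finset.subset_union_left
    rcases hdich S₀ hS₀ with hA | hB
    · -- already small
      have hI := chainExp_ind_one (t := t) hp0 X Stilde Ptilde hPt1 (l+1) S₀ hA
      have hE1 : chainExp X Ptilde (errp p X) (l+1) S₀ ≤ errp p X S₀ :=
        chainExp_le_errp hp0 X Ptilde hPt0 (fun S => le_of_eq (hPt1 S)) (l+1) S₀
      have hE2 : 0 ≤ chainExp (t := t) X (adaptP (t := t) p X) (errp p X) (l+1) S₀ :=
        chainExp_nonneg X _ _ (fun S T => adaptP_nonneg (t := t) p X S T)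
          (fun S => errp_nonneg' p X S) (l+1) S₀
      rw [hI]
      have hcast : (0:ℝ) ≤ ε₂ * (t : ℝ) * ((l:ℝ)+1) :=
        mul_nonneg (mul_nonneg hε₂.1.le (Nat.cast_nonneg t)) (by positivity)
      push_cast
      nlinarith [mul_nonneg hcast hM]
    · -- TV bound round
      simp only [chainExp]
      set M := errp p X Stilde with hMdef
      set El := fun T : Fin t → {x // x ∈ X} =>
        chainExp X (adaptP p X) (errp p X) l (S₀ ∪ tupleSet X T) with hEl
      set Il := fun T : Fin t → {x // x ∈ X} =>
        chainExp X Ptilde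
          (fun S => if errp p X S ≤ ε₁ * errp p X Stilde then (1:ℝ) else 0) l
          (S₀ ∪ tupleSet X T) with hIl
      have step1 : ∑ T : Fin t → {x // x ∈ X},
          Ptilde S₀ T * chainExp X Ptilde (errp p X) l (S₀ ∪ tupleSet X T)
          ≤ ∑ T : Fin t → {x // x ∈ X},
            Ptilde S₀ T * (El T + (ε₁ * Il T + ε₂ * t * l) * M) :=
        Finset.sum_le_sum fun T _ =>
          mul_le_mul_of_nonneg_left (ih _ (hsub T)) (hPt0 S₀ T)
      have expand : ∑ T : Fin t → {x // x ∈ X},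
          Ptilde S₀ T * (El T + (ε₁ * Il T + ε₂ * t * l) * M)
          = (∑ T : Fin t → {x // x ∈ X}, Ptilde S₀ T * El T)
            + ε₁ * (∑ T : Fin t → {x // x ∈ X}, Ptilde S₀ T * Il T) * M
            + (ε₂ * t * l) * M := by
        have h1 : ∀ T : Fin t → {x // x ∈ X},
            Ptilde S₀ T * (El T + (ε₁ * Il T + ε₂ * t * l) * M)
            = Ptilde S₀ T * El T + ε₁ * (Ptilde S₀ T * Il T) * M
              + (ε₂ * t * l * M) * Ptilde S₀ T := fun T => by ring
        rw [Finset.sum_congr rfl (fun T _ => h1 T), Finset.sum_add_distrib,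
          Finset.sum_add_distrib, ← Finset.mul_sum, hPt1 S₀, mul_one,
          ← Finset.sum_mul, ← Finset.mul_sum]
      have step2 : (∑ T : Fin t → {x // x ∈ X}, Ptilde S₀ T * El T)
          ≤ (∑ T : Fin t → {x // x ∈ X}, adaptP p X S₀ T * El T) + (ε₂ * t) * M := by
        have hEl0 : ∀ T, 0 ≤ El T := fun T =>
          chainExp_nonneg X _ _ (fun S T => adaptP_nonneg p X S T)
            (fun S => errp_nonneg' p X S) l _
        have hElM : ∀ T, El T ≤ M := fun T =>
          (chainExp_le_errp hp0 X _ (fun S T => adaptP_nonneg p X S T)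
            (fun S => adaptP_sum_le p X S) l _).trans (errp_anti hp0 X (hsub T))
        by_cases h0 : errp p X S₀ = 0
        · have hz : ∀ T, El T = 0 := by
            intro T
            have : El T ≤ errp p X (S₀ ∪ tupleSet X T) :=
              chainExp_le_errp hp0 X _ (fun S T => adaptP_nonneg p X S T)
                (fun S => adaptP_sum_le p X S) l _
            have h2 : errp p X (S₀ ∪ tupleSet X T) ≤ 0 :=
              h0 ▸ errp_anti hp0 X Finset.subset_union_left
            linarith [hEl0 T, errp_nonneg' p X (S₀ ∪ tupleSet X T)]
          simp only [hz, mul_zero, Finset.sum_const_zero, zero_add]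
          exact mul_nonneg (mul_nonneg hε₂.1.le (Nat.cast_nonneg t)) hM
        · exact tv_shift (Ptilde S₀) (adaptP p X S₀) El M (ε₂ * t) hM
            (by rw [hPt1 S₀, adaptP_sum p X S₀ h0]) hEl0 hElM hB
      have hfin : ε₂ * t * ((l:ℝ)+1) * M = ε₂ * t * l * M + ε₂ * t * M := by ring
      push_cast
      calc ∑ T : Fin t → {x // x ∈ X},
            Ptilde S₀ T * chainExp X Ptilde (errp p X) l (S₀ ∪ tupleSet X T)
          ≤ (∑ T : Fin t → {x // x ∈ X}, Ptilde S₀ T * El T)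
            + ε₁ * (∑ T : Fin t → {x // x ∈ X}, Ptilde S₀ T * Il T) * M
            + (ε₂ * t * l) * M := by rw [← expand]; exact step1
        _ ≤ (∑ T : Fin t → {x // x ∈ X}, adaptP p X S₀ T * El T)
            + (ε₁ * (∑ T : Fin t → {x // x ∈ X}, Ptilde S₀ T * Il T)
              + ε₂ * t * ((l:ℝ)+1)) * M := by nlinarith [step2]
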